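/- arXiv:0706.3028 — 2 statements merged into one kernel-verified Lean document; each statement's English description precedes it below -/
import Mathlib

section
/- Let R be a Noetherian regular local ring of prime characteristic p > 0 satisfying condition (*), and let a be an ideal of R. Then the set of F-jumping coefficients of a is a closed subset of ℝ. -/
/-- The `q`-th bracket power of an ideal: the ideal generated by the `q`-th powers
of the elements of `J`. -/
def bracketPow {R : Type*} [CommRing R] (J : Ideal R) (q : ℕ) : Ideal R :=
  Ideal.span ((fun x => x ^ q) '' (J : Set R))

/-- `Ie p a e` is the intersection of all ideals `I` with `a ⊆ I^{[p^e]}`. -/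
def Ie {R : Type*} [CommRing R] (p : ℕ) (a : Ideal R) (e : ℕ) : Ideal R :=
  sInf {I : Ideal R | a ≤ bracketPow I (p ^ e)}

/-- Condition (*): `a ⊆ I_e(a)^{[p^e]}` for every ideal `a` and every `e ≥ 1`. -/
def CondStar (R : Type*) [CommRing R] (p : ℕ) : Prop :=
  ∀ (a : Ideal R) (e : ℕ), 1 ≤ e → a ≤ bracketPow (Ie p a e) (p ^ e)

/-- The generalized test ideal `τ(a^c)`: the supremum, in the lattice of ideals of `R`,
of the ideals `I_e(a^{⌈c p^e⌉})` for `e ≥ 1`. -/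
noncomputable def tau {R : Type*} [CommRing R] (p : ℕ) (a : Ideal R) (c : ℝ) : Ideal R :=
  ⨆ e : {e : ℕ // 1 ≤ e}, Ie p (a ^ ⌈c * (p : ℝ) ^ (e : ℕ)⌉₊) (e : ℕ)

/-- `c > 0` is an F-jumping coefficient of `a` if `τ(a^c) ≠ τ(a^{c-ε})` for all
`0 < ε < c`. -/
def IsFJumpingCoeff {R : Type*} [CommRing R] (p : ℕ) (a : Ideal R) (c : ℝ) : Prop :=
  0 < c ∧ ∀ ε : ℝ, 0 < ε → ε < c → tau p a c ≠ tau p a (c - ε)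

/-- `x` is an accumulation point of `S ⊆ ℝ`. -/
def IsAccumulationPt (S : Set ℝ) (x : ℝ) : Prop :=
  ∀ ε : ℝ, 0 < ε → ∃ y ∈ S, y ≠ x ∧ |y - x| < ε

/-- `R` is a regular local ring: Noetherian, local, and the maximal ideal is generated
by `dim R` elements. -/
def IsRegularStmt (R : Type*) [CommRing R] [IsLocalRing R] : Prop :=
  ∃ s : Finset R, IsLocalRing.maximalIdeal R = Ideal.span (s : Set R) ∧
    (s.card : WithBot (WithTop ℕ)) = ringKrullDim R

/-!
The test ideals `τ(a^c)` decrease as `c` grows, and in a Noetherian ring every family of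
ideals has a maximal member. Hence `c ↦ τ(a^c)` is constant on some interval `(c, c + δ]`, so
jumping coefficients cannot accumulate at `c` from above; and if they accumulate at `c` from
below, the test ideals drop somewhere in every interval `(c - ε, c)`, so `c` itself is one.
-/

section JumpSet

variable {α : Type*}

/-- `{c | IsFJumpingCoeff p a c}` is `jumpSet (tau p a)` by definition. -/
def jumpSet (f : ℝ → α) : Set ℝ :=
  {c | 0 < c ∧ ∀ ε : ℝ, 0 < ε → ε < c → f c ≠ f (c - ε)}

variable {f : ℝ → α}

lemma ne_of_mem_jumpSet {c t : ℝ} (hc : c ∈ jumpSet f) (ht₀ : 0 < t) (htc : t < c) :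
    f t ≠ f c := by
  have h := hc.2 (c - t) (by linarith) (by linarith)
  rwa [sub_sub_cancel, ne_comm] at h

variable [PartialOrder α]

lemma Antitone.exists_eqOn_Ioc [WellFoundedGT α] (hf : Antitone f) (c : ℝ) :
    ∃ u, c < u ∧ ∀ t ∈ Set.Ioc c u, f t = f u := by
  obtain ⟨_, ⟨u, hcu, rfl⟩, hmax⟩ :=
    exists_maximal_of_wellFoundedGT (· ∈ f '' Set.Ioi c) ⟨f (c + 1), c + 1, by simp, rfl⟩
  exact ⟨u, hcu, fun t ht => le_antisymm (hmax ⟨t, ht.1, rfl⟩ (hf ht.2)) (hf ht.2)⟩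

lemma Antitone.exists_jumpSet_inter_Ioo_eq_empty [WellFoundedGT α] (hf : Antitone f) (c : ℝ) :
    ∃ u, c < u ∧ jumpSet f ∩ Set.Ioo c u = ∅ := by
  obtain ⟨u, hcu, hconst⟩ := hf.exists_eqOn_Ioc c
  refine ⟨u, hcu, Set.eq_empty_of_forall_notMem fun d ⟨hd, hcd, hdu⟩ => ?_⟩
  obtain ⟨t, hct, htd⟩ := exists_between (max_lt hcd hd.1)
  rw [max_lt_iff] at hct
  exact ne_of_mem_jumpSet hd hct.2 htd <|
    (hconst t ⟨hct.1, by linarith⟩).trans (hconst d ⟨hcd, hdu.le⟩).symm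

lemma Antitone.mem_jumpSet_of_forall_exists_mem_Ioo (hf : Antitone f) {c : ℝ}
    (hacc : ∀ ε > 0, ∃ d ∈ jumpSet f, d ∈ Set.Ioo (c - ε) c) : c ∈ jumpSet f := by
  obtain ⟨d₀, hd₀, -, hd₀c⟩ := hacc 1 one_pos
  refine ⟨hd₀.1.trans hd₀c, fun ε hε hεc heq => ?_⟩
  obtain ⟨d, hd, hlt, hdc⟩ := hacc ε hε
  -- `f c ≤ f d ≤ f (c - ε) = f c`, while `d` is a jump beyond `c - ε > 0`.
  refine ne_of_mem_jumpSet hd (by linarith) hlt (le_antisymm ?_ (hf hlt.le))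
  exact heq ▸ hf hdc.le

theorem Antitone.isClosed_jumpSet [WellFoundedGT α] (hf : Antitone f) :
    IsClosed (jumpSet f) := by
  refine isClosed_of_closure_subset fun c hc => ?_
  by_contra hcS
  obtain ⟨u, hcu, hempty⟩ := hf.exists_jumpSet_inter_Ioo_eq_empty c
  refine hcS (hf.mem_jumpSet_of_forall_exists_mem_Ioo fun ε hε => ?_)
  obtain ⟨d, hd, hdist⟩ :=
    Metric.mem_closure_iff.1 hc (min ε (u - c)) (lt_min hε (sub_pos.2 hcu))
  rw [dist_comm, Real.dist_eq, abs_lt, lt_min_iff] at hdist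
  have hdc : d < c := by
    refine lt_of_le_of_ne (not_lt.1 fun hcd => ?_) fun h => hcS (h ▸ hd)
    exact Set.eq_empty_iff_forall_notMem.1 hempty d ⟨hd, hcd, by linarith⟩
  exact ⟨d, hd, by linarith [min_le_left ε (u - c)], hdc⟩

end JumpSet

lemma Ie_mono {R : Type*} [CommRing R] (p : ℕ) (e : ℕ) : Monotone fun b : Ideal R => Ie p b e :=
  fun _ _ h => sInf_le_sInf fun _ hI => h.trans hI

lemma tau_antitone {R : Type*} [CommRing R] (p : ℕ) (a : Ideal R) : Antitone (tau p a) :=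
  fun _ _ h => iSup_mono fun e => Ie_mono p e <| Ideal.pow_le_pow_right <|
    Nat.ceil_le_ceil <| mul_le_mul_of_nonneg_right h (pow_nonneg p.cast_nonneg _)

theorem stmt2_general {R : Type*} [CommRing R] [IsNoetherianRing R]
    (p : ℕ) (a : Ideal R) :
    IsClosed {c : ℝ | IsFJumpingCoeff p a c} :=
  (tau_antitone p a).isClosed_jumpSet

/-- The set of F-jumping coefficients of an ideal is closed in `ℝ`. -/
theorem stmt2 {R : Type*} [CommRing R] [IsNoetherianRing R] [IsLocalRing R]
    (p : ℕ) (hp : p.Prime) [CharP R p]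
    (hreg : IsRegularStmt R) (hstar : CondStar R p) (a : Ideal R) :
    IsClosed {c : ℝ | IsFJumpingCoeff p a c} :=
  stmt2_general p a
end

section
/- Let p ≥ 2 be an integer, let m be a positive integer, and let C ⊆ [0, m] be a set consisting only of irrational numbers and satisfying: (a) for every c ∈ C there exists ε > 0 such that the open interval (c, c + ε) is disjoint from C; (b) C is closed in [0, m]; (c) for every c ∈ C and every integer e ≥ 1, the modulo-m part {p^e c} belongs to C. Then C is empty. -/
/-- The modulo-`m` part of a real number `s`: `{s} = s - m⌊s/m⌋ ∈ [0, m)`. -/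
noncomputable def modPart (m : ℕ) (s : ℝ) : ℝ := s - m * ⌊s / m⌋

/-! By Zorn's lemma `C` contains a minimal nonempty compact set `X` invariant under the maps
`x ↦ {pᵉ x}`. Orbits of irrational points are infinite, so `X` has accumulation points. Near an
irrational point each map is an affine expansion, so it sends accumulation points of `X` to
accumulation points of `X`; by minimality every point of `X`, in particular `min X`, is an
accumulation point of `X`, which contradicts (a). -/

open Filter Topology Set

theorem Int.eventually_floor_eq {α : Type*} [Ring α] [LinearOrder α] [FloorRing α]
    [IsStrictOrderedRing α] [TopologicalSpace α] [OrderTopology α] {x : α} (h : x ≠ ⌊x⌋) :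
    ∀ᶠ y in 𝓝 x, ⌊y⌋ = ⌊x⌋ :=
  eventually_of_mem (Ico_mem_nhds ((Int.floor_le x).lt_of_ne h.symm) (Int.lt_floor_add_one x))
    (Int.floor_eq_on_Ico _)

theorem AccPt.map_of_tendsto_nhdsNE {X Y : Type*} [TopologicalSpace X] [TopologicalSpace Y]
    {f : X → Y} {x : X} {s : Set X} {t : Set Y} (h : AccPt x (𝓟 s))
    (hf : Tendsto f (𝓝[≠] x) (𝓝[≠] (f x))) (hst : MapsTo f s t) : AccPt (f x) (𝓟 t) :=
  (NeBot.map h f).mono (map_inf_le.trans (inf_le_inf hf hst.tendsto))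

theorem not_accPt_of_Ioo_inter_eq_empty {α : Type*} [LinearOrder α] [TopologicalSpace α]
    [OrderTopology α] {s : Set α} {a b : α} (ha : a ∈ lowerBounds s) (hab : a < b)
    (hgap : Ioo a b ∩ s = ∅) : ¬ AccPt a (𝓟 s) := by
  rw [accPt_iff_nhds]
  intro h
  obtain ⟨y, ⟨hyb, hys⟩, hya⟩ := h (Iio b) (Iio_mem_nhds hab)
  exact hgap.subset ⟨⟨(ha hys).lt_of_ne' hya, hyb⟩, hys⟩

theorem exists_minimal_nonempty_compact_invariant {X ι : Type*} [TopologicalSpace X] [T2Space X]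
    (f : ι → X → X) {K : Set X} (hne : K.Nonempty) (hK : IsCompact K)
    (hinv : ∀ i, MapsTo (f i) K K) :
    ∃ M ⊆ K, Minimal (fun M => M.Nonempty ∧ IsCompact M ∧ ∀ i, MapsTo (f i) M M) M := by
  refine zorn_superset_nonempty _ (fun c hcS hchain ⟨M₀, hM₀⟩ => ?_) K ⟨hne, hK, hinv⟩
  have : Nonempty c := ⟨⟨M₀, hM₀⟩⟩
  have hclosed : ∀ M ∈ c, IsClosed M := fun M hM => (hcS hM).2.1.isClosed
  refine ⟨⋂₀ c, ⟨?_, ?_, fun i x hx => mem_sInter.2 fun M hM => (hcS hM).2.2 i (hx M hM)⟩,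
    fun M hM => sInter_subset_of_mem hM⟩
  · exact IsCompact.nonempty_sInter_of_directed_nonempty_isCompact_isClosed
      (fun a ha b hb => (hchain.total ha hb).elim (fun h => ⟨a, ha, le_rfl, h⟩)
        fun h => ⟨b, hb, h, le_rfl⟩) (fun M hM => (hcS hM).1) (fun M hM => (hcS hM).2.1) hclosed
  · exact (hcS hM₀).2.1.of_isClosed_subset (isClosed_sInter hclosed) (sInter_subset_of_mem hM₀)

theorem modPart_eventuallyEq {m : ℕ} {s : ℝ} (h : s / m ≠ ⌊s / m⌋) :
    modPart m =ᶠ[𝓝 s] fun t => t - m * ⌊s / m⌋ :=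
  ((continuous_id.div_const (m : ℝ)).tendsto s).eventually (Int.eventually_floor_eq h) |>.mono
    fun t (ht : ⌊t / m⌋ = ⌊s / m⌋) => by rw [modPart, ht]

theorem tendsto_modPart_nhdsNE {m : ℕ} {s : ℝ} (h : s / m ≠ ⌊s / m⌋) :
    Tendsto (modPart m) (𝓝[≠] s) (𝓝[≠] (modPart m s)) := by
  have hs := modPart_eventuallyEq h
  have hg := (Homeomorph.subRight ((m : ℝ) * ⌊s / m⌋)).map_punctured_nhds_eq s
  rw [Homeomorph.subRight_apply] at hg
  rw [hs.eq_of_nhds, ← hg]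
  exact tendsto_map.congr' (hs.filter_mono nhdsWithin_le_nhds).symm

theorem tendsto_modPart_mul_nhdsNE {m : ℕ} (hm : m ≠ 0) {q x : ℝ} (hq : q ≠ 0)
    (hx : Irrational (q * x)) :
    Tendsto (fun y => modPart m (q * y)) (𝓝[≠] x) (𝓝[≠] (modPart m (q * x))) := by
  have hmul := (Homeomorph.mulLeft₀ q hq).map_punctured_nhds_eq x
  rw [Homeomorph.coe_mulLeft₀] at hmul
  exact (tendsto_modPart_nhdsNE ((hx.div_natCast hm).ne_int _)).comp (hmul ▸ tendsto_map)

theorem modPart_ne_of_irrational_sub {m : ℕ} {s t : ℝ} (h : Irrational (s - t)) :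
    modPart m s ≠ modPart m t := by
  intro hst
  refine h.ne_int (m * (⌊s / m⌋ - ⌊t / m⌋)) ?_
  simp only [modPart] at hst
  push_cast
  linarith

theorem injective_modPart_pow_mul {p m : ℕ} (hp : 2 ≤ p) {x : ℝ} (hx : Irrational x) :
    Function.Injective fun e : ℕ => modPart m ((p : ℝ) ^ e * x) := by
  intro e f hef
  by_contra hne
  have hpow : (p ^ e - p ^ f : ℤ) ≠ 0 :=
    sub_ne_zero.2 fun h => hne (Nat.pow_right_injective hp (by exact_mod_cast h))
  refine modPart_ne_of_irrational_sub ?_ hef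
  convert hx.intCast_mul hpow using 1
  push_cast
  ring

/-- A set `C ⊆ [0, m]` of irrational numbers satisfying conditions (a), (b), (c)
is empty. -/
theorem stmt8 (p m : ℕ) (hp : 2 ≤ p) (hm : 1 ≤ m) (C : Set ℝ)
    (hsub : C ⊆ Set.Icc (0 : ℝ) (m : ℝ))
    (hirr : ∀ c ∈ C, Irrational c)
    (ha : ∀ c ∈ C, ∃ ε : ℝ, 0 < ε ∧ Set.Ioo c (c + ε) ∩ C = ∅)
    (hb : IsClosed C)
    (hc : ∀ c ∈ C, ∀ e : ℕ, 1 ≤ e → modPart m ((p : ℝ) ^ e * c) ∈ C) :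
    C = ∅ := by
  set f : ℕ+ → ℝ → ℝ := fun e x => modPart m ((p : ℝ) ^ (e : ℕ) * x)
  by_contra hne
  obtain ⟨X, hXC, ⟨⟨x₀, hx₀⟩, hXc, hXf⟩, hXmin⟩ := exists_minimal_nonempty_compact_invariant f
    (nonempty_iff_ne_empty.2 hne) (isCompact_Icc.of_isClosed_subset hb hsub)
    fun e c hcC => hc c hcC e e.pos
  have hXinf : X.Infinite := infinite_of_injective_forall_mem
    ((injective_modPart_pow_mul hp (hirr x₀ (hXC hx₀))).comp PNat.coe_injective)
    fun e => hXf e hx₀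
  have hDX : derivedSet X ⊆ X := (isClosed_iff_derivedSet_subset X).1 hXc.isClosed
  have hD : (derivedSet X).Nonempty ∧ IsCompact (derivedSet X) ∧
      ∀ e, MapsTo (f e) (derivedSet X) (derivedSet X) := by
    refine ⟨?_, hXc.of_isClosed_subset (isClosed_derivedSet X) hDX, fun e a haX => ?_⟩
    · obtain ⟨a, -, haX⟩ := hXinf.exists_accPt_of_subset_isCompact hXc subset_rfl
      exact ⟨a, haX⟩
    · have hirr' : Irrational ((p : ℝ) ^ (e : ℕ) * a) := by
        simpa using (hirr a (hXC (hDX haX))).natCast_mul (pow_ne_zero e (by omega : p ≠ 0))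
      exact haX.map_of_tendsto_nhdsNE (tendsto_modPart_mul_nhdsNE (by omega)
        (pow_ne_zero _ (by positivity)) hirr') (hXf e)
  have hXD : X ⊆ derivedSet X := hXmin hD hDX
  have hinf := hXc.sInf_mem ⟨x₀, hx₀⟩
  obtain ⟨ε, hε, hgap⟩ := ha _ (hXC hinf)
  exact not_accPt_of_Ioo_inter_eq_empty (fun x hx => csInf_le hXc.bddBelow hx)
    (lt_add_of_pos_right _ hε) (subset_empty_iff.1 (hgap ▸ inter_subset_inter_right _ hXC))
    (hXD hinf)
end
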